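/- Let K be a field of characteristic p > 0 and let A_n be the n-th Weyl algebra over K, with centre Z_n = K[X_1, …, X_{2n}] where X_i = x_i^p. Then the restriction map res_n : Aut_K(A_n) → Aut_K(Z_n), σ ↦ σ|_{Z_n}, is an injective group homomorphism. -/

import Mathlib

/-!
STATEMENT 17: Let `K` be a field of characteristic `p > 0` and `A_n` the `n`-th Weyl
algebra over `K`, with centre `Z_n`.  The restriction map
`res_n : Aut_K(A_n) → Aut_K(Z_n)`, `σ ↦ σ|_{Z_n}`, is an injective group homomorphism.

Here `res` is given as data together with the characterising property
`res σ z = σ z` for `z ∈ Z_n` (every automorphism maps the centre to itself), and the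
conclusion asserts that it is multiplicative and injective.
-/

noncomputable section

/-- The defining relations of the `n`-th Weyl algebra: the `x_i` (indexed by `Sum.inl`)
commute, the `∂_i` (indexed by `Sum.inr`) commute, and `∂_i x_j = x_j ∂_i + δ_{ij}`. -/
inductive WeylRelN (K : Type*) [CommRing K] (n : ℕ) :
    FreeAlgebra K (Fin n ⊕ Fin n) → FreeAlgebra K (Fin n ⊕ Fin n) → Prop
  | xx (i j : Fin n) : WeylRelN K n
      (FreeAlgebra.ι K (Sum.inl i) * FreeAlgebra.ι K (Sum.inl j))
      (FreeAlgebra.ι K (Sum.inl j) * FreeAlgebra.ι K (Sum.inl i))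
  | dd (i j : Fin n) : WeylRelN K n
      (FreeAlgebra.ι K (Sum.inr i) * FreeAlgebra.ι K (Sum.inr j))
      (FreeAlgebra.ι K (Sum.inr j) * FreeAlgebra.ι K (Sum.inr i))
  | dx_ne (i j : Fin n) (h : i ≠ j) : WeylRelN K n
      (FreeAlgebra.ι K (Sum.inr i) * FreeAlgebra.ι K (Sum.inl j))
      (FreeAlgebra.ι K (Sum.inl j) * FreeAlgebra.ι K (Sum.inr i))
  | dx (i : Fin n) : WeylRelN K n
      (FreeAlgebra.ι K (Sum.inr i) * FreeAlgebra.ι K (Sum.inl i))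
      (FreeAlgebra.ι K (Sum.inl i) * FreeAlgebra.ι K (Sum.inr i) + 1)

/-- The `n`-th Weyl algebra `A_n(K)`. -/
abbrev WeylN (K : Type*) [CommRing K] (n : ℕ) := RingQuot (WeylRelN K n)

/-!
If two automorphisms `σ, τ` agree on the centre, then `τ⁻¹σ` fixes `g ^ p` for every generator
`g`, so it suffices that `a ^ p = g ^ p` forces `a = g`.

`A_n` acts faithfully on `K[X_1, …, X_n, Y_1, …, Y_n]` by `x_i ↦ X_i`, `∂_i ↦ ∂/∂X_i + Y_i`,
and `a ↦ a • 1` inverts the normal ordering `X^α Y^β ↦ x^α ∂^β`. If the normal form `f` of `a`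
has total degree `≤ d`, then `a` raises total degree by at most `d` and, up to an operator
raising it by less than `d`, acts as multiplication by `f`; such symbols are multiplicative.
Writing `Z` for the variable of `g`, comparing the symbols of `a ^ p` and `g ^ p` shows that
`(f - Z) ^ p` has total degree `< p * max 1 (deg (f - Z))`, so `f - Z` is a constant `c`, and
`g ^ p = (g + c) ^ p = g ^ p + c ^ p` gives `c = 0`.
-/

open MvPolynomial
open scoped Pointwise

namespace MvPolynomial

variable {σ R : Type*} [CommRing R]

variable (σ R) in
def restrictTotalDegreeLT (m : ℕ) : Submodule R (MvPolynomial σ R) :=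
  restrictSupport R {μ | μ.degree < m}

lemma restrictTotalDegree_eq_restrictSupport (m : ℕ) :
    restrictTotalDegree σ R m = restrictSupport R {μ | μ.degree ≤ m} := rfl

lemma mul_mem_restrictSupport {s t u : Set (σ →₀ ℕ)} (h : s + t ⊆ u) {f g : MvPolynomial σ R}
    (hf : f ∈ restrictSupport R s) (hg : g ∈ restrictSupport R t) :
    f * g ∈ restrictSupport R u :=
  restrictSupport_mono R h (restrictSupport_add R s t ▸ Submodule.mul_mem_mul hf hg)

lemma mul_mem_restrictTotalDegreeLT {a b : ℕ} {f g : MvPolynomial σ R}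
    (hf : f ∈ restrictTotalDegree σ R a) (hg : g ∈ restrictTotalDegreeLT σ R b) :
    f * g ∈ restrictTotalDegreeLT σ R (a + b) := by
  rw [restrictTotalDegree_eq_restrictSupport] at *
  refine mul_mem_restrictSupport ?_ hf hg
  rintro _ ⟨μ, hμ, ν, hν, rfl⟩
  simp only [Set.mem_ofPred_eq, map_add] at hμ hν ⊢
  omega

lemma mul_mem_restrictTotalDegree {a b : ℕ} {f g : MvPolynomial σ R}
    (hf : f ∈ restrictTotalDegree σ R a) (hg : g ∈ restrictTotalDegree σ R b) :
    f * g ∈ restrictTotalDegree σ R (a + b) := by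
  rw [restrictTotalDegree_eq_restrictSupport] at *
  refine mul_mem_restrictSupport ?_ hf hg
  rintro _ ⟨μ, hμ, ν, hν, rfl⟩
  simp only [Set.mem_ofPred_eq, map_add] at hμ hν ⊢
  omega

lemma restrictTotalDegree_mono {a b : ℕ} (h : a ≤ b) :
    restrictTotalDegree σ R a ≤ restrictTotalDegree σ R b :=
  restrictSupport_mono R fun μ (hμ : μ.degree ≤ a) ↦ (hμ.trans h : μ.degree ≤ b)

lemma restrictTotalDegreeLT_mono {a b : ℕ} (h : a ≤ b) :
    restrictTotalDegreeLT σ R a ≤ restrictTotalDegreeLT σ R b :=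
  restrictSupport_mono R fun μ (hμ : μ.degree < a) ↦ (hμ.trans_le h : μ.degree < b)

lemma restrictTotalDegreeLT_le_restrictTotalDegree (m : ℕ) :
    restrictTotalDegreeLT σ R m ≤ restrictTotalDegree σ R m :=
  restrictSupport_mono R fun μ (hμ : μ.degree < m) ↦ (hμ.le : μ.degree ≤ m)

lemma totalDegree_lt_of_mem_restrictTotalDegreeLT {m : ℕ} {f : MvPolynomial σ R} (hf0 : f ≠ 0)
    (hf : f ∈ restrictTotalDegreeLT σ R m) : f.totalDegree < m := by
  have hm : 0 < m := by
    obtain ⟨μ, hμ⟩ := support_nonempty.mpr hf0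
    exact (Nat.zero_le _).trans_lt (hf hμ)
  exact (Finset.sup_lt_iff hm).mpr fun μ hμ ↦ hf hμ

lemma pderiv_mem_restrictTotalDegreeLT (i : σ) {m : ℕ} {f : MvPolynomial σ R}
    (hf : f ∈ restrictTotalDegree σ R m) : pderiv i f ∈ restrictTotalDegreeLT σ R m := by
  rw [restrictTotalDegree_eq_restrictSupport, mem_restrictSupport_iff] at hf
  rw [restrictTotalDegreeLT, mem_restrictSupport_iff]
  intro μ hμ
  rw [Finset.mem_coe, mem_support_iff, coeff_pderiv] at hμ
  have := hf (mem_support_iff.mpr (left_ne_zero_of_mul hμ))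
  simp only [Set.mem_ofPred_eq, map_add, Finsupp.degree_single] at this ⊢
  omega

lemma pderiv_comm (i j : σ) (f : MvPolynomial σ R) :
    pderiv i (pderiv j f) = pderiv j (pderiv i f) := by
  suffices h : ⁅pderiv i, pderiv j⁆ = (0 : Derivation R (MvPolynomial σ R) (MvPolynomial σ R)) by
    have := congr($h f)
    rwa [Derivation.commutator_apply, Derivation.zero_apply, sub_eq_zero] at this
  refine derivation_ext fun k ↦ ?_
  classical
  simp only [Derivation.commutator_apply, Derivation.zero_apply, pderiv_X, Pi.single_apply]
  split_ifs <;> simp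

lemma totalDegree_pow_of_isDomain [IsDomain R] (f : MvPolynomial σ R) (n : ℕ) :
    (f ^ n).totalDegree = n * f.totalDegree := by
  rcases eq_or_ne f 0 with rfl | hf
  · rcases n with _ | n <;> simp
  induction n with
  | zero => simp
  | succ n ih =>
    rw [pow_succ, totalDegree_mul_of_isDomain (pow_ne_zero n hf) hf, ih, Nat.succ_mul]

lemma totalDegree_mul_X [Nontrivial R] {p : MvPolynomial σ R} (hp : p ≠ 0) (s : σ) :
    (p * X s).totalDegree = p.totalDegree + 1 := by
  refine le_antisymm ((totalDegree_mul _ _).trans (by rw [totalDegree_X])) ?_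
  obtain ⟨μ, hμ, hμdeg⟩ := Finset.exists_mem_eq_sup p.support (support_nonempty.mpr hp)
    fun μ ↦ μ.sum fun _ e ↦ e
  have hmem : μ + Finsupp.single s 1 ∈ (p * X s).support := by
    rwa [mem_support_iff, coeff_mul_X, ← mem_support_iff]
  have := le_totalDegree hmem
  rw [Finsupp.sum_add_index' (fun _ ↦ rfl) (fun _ _ _ ↦ rfl), Finsupp.sum_single_index rfl] at this
  rwa [totalDegree, hμdeg]

def IsSymbol (d : ℕ) (T : Module.End R (MvPolynomial σ R)) (f : MvPolynomial σ R) : Prop :=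
  f ∈ restrictTotalDegree σ R d ∧
    ∀ k, ∀ g ∈ restrictTotalDegree σ R k, T g - f * g ∈ restrictTotalDegreeLT σ R (d + k)

namespace IsSymbol

variable {d e : ℕ} {S T : Module.End R (MvPolynomial σ R)} {f g : MvPolynomial σ R}

lemma mono (hT : IsSymbol d T f) (h : d ≤ e) : IsSymbol e T f :=
  ⟨restrictTotalDegree_mono h hT.1, fun k g hg ↦
    restrictTotalDegreeLT_mono (by omega) (hT.2 k g hg)⟩

lemma add (hS : IsSymbol d S f) (hT : IsSymbol d T g) : IsSymbol d (S + T) (f + g) := by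
  refine ⟨add_mem hS.1 hT.1, fun k h hh ↦ ?_⟩
  rw [LinearMap.add_apply, add_mul, add_sub_add_comm]
  exact add_mem (hS.2 k h hh) (hT.2 k h hh)

lemma map_mem (hT : IsSymbol d T f) {m : ℕ} {g : MvPolynomial σ R}
    (hg : g ∈ restrictTotalDegreeLT σ R m) : T g ∈ restrictTotalDegreeLT σ R (d + m) := by
  rw [← sub_add_cancel (T g) (f * g)]
  exact add_mem (hT.2 m g (restrictTotalDegreeLT_le_restrictTotalDegree m hg))
    (mul_mem_restrictTotalDegreeLT hT.1 hg)

lemma mul (hS : IsSymbol d S f) (hT : IsSymbol e T g) : IsSymbol (d + e) (S * T) (f * g) := by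
  refine ⟨mul_mem_restrictTotalDegree hS.1 hT.1, fun k h hh ↦ ?_⟩
  have hTh := hS.map_mem (hT.2 k h hh)
  have hSgh := hS.2 (e + k) (g * h) (mul_mem_restrictTotalDegree hT.1 hh)
  rw [add_assoc]
  convert add_mem hTh hSgh using 1
  rw [Module.End.mul_apply, map_sub]
  ring

lemma sub_mem_restrictTotalDegreeLT {f' : MvPolynomial σ R} (hT : IsSymbol d T f)
    (hT' : IsSymbol d T f') : f - f' ∈ restrictTotalDegreeLT σ R d := by
  have h1 : (1 : MvPolynomial σ R) ∈ restrictTotalDegree σ R 0 := by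
    simp [mem_restrictTotalDegree]
  simpa using sub_mem (hT'.2 0 1 h1) (hT.2 0 1 h1)

end IsSymbol

lemma isSymbol_mulLeft {d : ℕ} {f : MvPolynomial σ R} (hf : f ∈ restrictTotalDegree σ R d) :
    IsSymbol d (LinearMap.mulLeft R f) f :=
  ⟨hf, fun _ _ _ ↦ by simp⟩

lemma IsSymbol.pow {d : ℕ} {T : Module.End R (MvPolynomial σ R)} {f : MvPolynomial σ R}
    (hT : IsSymbol d T f) (n : ℕ) : IsSymbol (n * d) (T ^ n) (f ^ n) := by
  induction n with
  | zero =>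
    simpa [Module.End.one_eq_id] using isSymbol_mulLeft
      (by simp [mem_restrictTotalDegree] : (1 : MvPolynomial σ R) ∈ restrictTotalDegree σ R 0)
  | succ n ih => simpa [pow_succ, Nat.succ_mul] using ih.mul hT

lemma isSymbol_pderiv (i : σ) : IsSymbol 1 (pderiv i).toLinearMap (0 : MvPolynomial σ R) :=
  ⟨zero_mem _, fun k _ hg ↦ by
    simpa using restrictTotalDegreeLT_mono (by omega) (pderiv_mem_restrictTotalDegreeLT i hg)⟩

end MvPolynomial

namespace MvPolynomial

variable {ι R A : Type*} [CommSemiring R] [Semiring A] [Algebra R A]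

open scoped IsMulCommutative in
def aevalOfCommute (v : ι → A) (hv : ∀ i j, Commute (v i) (v j)) :
    MvPolynomial ι R →ₐ[R] A :=
  have := Algebra.isMulCommutative_adjoin R (s := Set.range v) (by
    rintro _ ⟨i, rfl⟩ _ ⟨j, rfl⟩; exact hv i j)
  (Algebra.adjoin R (Set.range v)).val.comp
    (aeval fun i ↦ ⟨v i, Algebra.subset_adjoin ⟨i, rfl⟩⟩)

@[simp]
lemma aevalOfCommute_X (v : ι → A) (hv : ∀ i j, Commute (v i) (v j)) (i : ι) :
    aevalOfCommute (R := R) v hv (X i) = v i := by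
  simp [aevalOfCommute]

end MvPolynomial

lemma commute_pow_of_mul_sub_mul_eq_algebraMap {R A : Type*} [CommRing R] [Ring A]
    [Algebra R A] (p : ℕ) [CharP R p] {u v : A} {c : R} (h : u * v - v * u = algebraMap R A c) :
    Commute (u ^ p) v := by
  have key : ∀ k : ℕ,
      u ^ (k + 1) * v - v * u ^ (k + 1) = algebraMap R A ((k + 1 : ℕ) * c) * u ^ k := by
    intro k
    induction k with
    | zero => simpa using h
    | succ k ih =>
      calc u ^ (k + 1 + 1) * v - v * u ^ (k + 1 + 1)
          = u * (u ^ (k + 1) * v - v * u ^ (k + 1)) + (u * v - v * u) * u ^ (k + 1) := by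
            rw [pow_succ' u (k + 1)]; noncomm_ring
        _ = algebraMap R A ((k + 1 + 1 : ℕ) * c) * u ^ (k + 1) := by
            rw [ih, h, ← mul_assoc, ← Algebra.commutes, mul_assoc, ← pow_succ', ← add_mul,
              ← map_add]
            congr 2
            push_cast
            ring
  rcases p with _ | k
  · exact (pow_zero u).symm ▸ Commute.one_left v
  · have := key k
    rw [CharP.cast_eq_zero R (k + 1), zero_mul, map_zero, zero_mul, sub_eq_zero] at this
    exact this

namespace WeylN

open Sum

variable (K : Type*) [CommRing K] {n : ℕ}

def gen (s : Fin n ⊕ Fin n) : WeylN K n :=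
  RingQuot.mkAlgHom K (WeylRelN K n) (FreeAlgebra.ι K s)

lemma gen_inl_commute (i j : Fin n) : Commute (gen K (inl i)) (gen K (inl j)) := by
  show _ * _ = _ * _
  simpa [gen] using RingQuot.mkAlgHom_rel K (WeylRelN.xx (K := K) i j)

lemma gen_inr_commute (i j : Fin n) : Commute (gen K (inr i)) (gen K (inr j)) := by
  show _ * _ = _ * _
  simpa [gen] using RingQuot.mkAlgHom_rel K (WeylRelN.dd (K := K) i j)

lemma gen_inr_mul_gen_inl (i j : Fin n) :
    gen K (inr i) * gen K (inl j) = gen K (inl j) * gen K (inr i) + if i = j then 1 else 0 := by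
  split_ifs with h
  · subst h
    simpa [gen] using RingQuot.mkAlgHom_rel K (WeylRelN.dx (K := K) i)
  · simpa [gen] using RingQuot.mkAlgHom_rel K (WeylRelN.dx_ne (K := K) i j h)

lemma adjoin_range_gen : Algebra.adjoin K (Set.range (gen K (n := n))) = ⊤ := by
  rw [show gen K = RingQuot.mkAlgHom K (WeylRelN K n) ∘ FreeAlgebra.ι K from rfl,
    Set.range_comp, ← AlgHom.map_adjoin, FreeAlgebra.adjoin_range_ι, Algebra.map_top,
    AlgHom.range_eq_top]
  exact RingQuot.mkAlgHom_surjective K _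

variable {K} in
lemma algHom_ext {B : Type*} [Semiring B] [Algebra K B] {f g : WeylN K n →ₐ[K] B}
    (h : ∀ s, f (gen K s) = g (gen K s)) : f = g :=
  RingQuot.ringQuot_ext' K _ _ (FreeAlgebra.hom_ext (funext h))

def repGen : Fin n ⊕ Fin n → Module.End K (MvPolynomial (Fin n ⊕ Fin n) K)
  | inl i => LinearMap.mulLeft K (X (inl i))
  | inr i => (pderiv (inl i)).toLinearMap + LinearMap.mulLeft K (X (inr i))

def rep : WeylN K n →ₐ[K] Module.End K (MvPolynomial (Fin n ⊕ Fin n) K) :=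
  RingQuot.liftAlgHom K ⟨FreeAlgebra.lift K (repGen K), fun a b h ↦ by
    induction h with
    | xx i j => refine LinearMap.ext fun f ↦ ?_; simp [repGen]; ring
    | dd i j => refine LinearMap.ext fun f ↦ ?_; simp [repGen, pderiv_comm (inl i)]; ring
    | dx_ne i j h => refine LinearMap.ext fun f ↦ ?_; simp [repGen, h]; ring
    | dx i => refine LinearMap.ext fun f ↦ ?_; simp [repGen]; ring⟩

@[simp]
lemma rep_gen (s : Fin n ⊕ Fin n) : rep K (gen K s) = repGen K s := by
  simp [rep, gen]

def xPart : MvPolynomial (Fin n ⊕ Fin n) K →ₐ[K] WeylN K n :=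
  aevalOfCommute (Sum.elim (fun i ↦ gen K (inl i)) 1) (by
    rintro (i | i) (j | j) <;> simp [gen_inl_commute])

def dPart : MvPolynomial (Fin n ⊕ Fin n) K →ₐ[K] WeylN K n :=
  aevalOfCommute (Sum.elim 1 (fun i ↦ gen K (inr i))) (by
    rintro (i | i) (j | j) <;> simp [gen_inr_commute])

/-- The normal ordering `X^α Y^β ↦ x^α ∂^β`, where the variables `X (inl i)` stand for the `x_i`
and the variables `X (inr i)` for the `∂_i`. -/
def normalOrder : MvPolynomial (Fin n ⊕ Fin n) K →ₗ[K] WeylN K n :=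
  (basisMonomials _ K).constr K fun μ ↦ xPart K (monomial μ 1) * dPart K (monomial μ 1)

variable {K}

lemma normalOrder_monomial (μ : Fin n ⊕ Fin n →₀ ℕ) :
    normalOrder K (monomial μ 1) = xPart K (monomial μ 1) * dPart K (monomial μ 1) :=
  (basisMonomials _ K).constr_basis K _ μ

lemma normalOrder_one : normalOrder K (1 : MvPolynomial (Fin n ⊕ Fin n) K) = 1 := by
  simpa using normalOrder_monomial (K := K) (0 : Fin n ⊕ Fin n →₀ ℕ)

lemma normalOrder_C (c : K) : normalOrder K (C c : MvPolynomial (Fin n ⊕ Fin n) K) =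
    algebraMap K (WeylN K n) c := by
  rw [C_eq_smul_one, map_smul, normalOrder_one, Algebra.algebraMap_eq_smul_one]

lemma normalOrder_X_inl_mul (i : Fin n) (f : MvPolynomial (Fin n ⊕ Fin n) K) :
    normalOrder K (X (inl i) * f) = gen K (inl i) * normalOrder K f := by
  suffices h : normalOrder K ∘ₗ LinearMap.mulLeft K (X (inl i)) =
      LinearMap.mulLeft K (gen K (inl i)) ∘ₗ normalOrder K from congr($h f)
  refine (basisMonomials _ K).ext fun μ ↦ ?_
  have hμ : X (inl i) * monomial μ (1 : K) = monomial (Finsupp.single (inl i) 1 + μ) 1 := by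
    rw [X, monomial_mul, one_mul]
  simp only [coe_basisMonomials, LinearMap.comp_apply, LinearMap.mulLeft_apply]
  rw [hμ, normalOrder_monomial, normalOrder_monomial, ← hμ, map_mul, map_mul]
  simp [xPart, dPart, mul_assoc]

lemma normalOrder_mul_X_inr (i : Fin n) (f : MvPolynomial (Fin n ⊕ Fin n) K) :
    normalOrder K (f * X (inr i)) = normalOrder K f * gen K (inr i) := by
  suffices h : normalOrder K ∘ₗ LinearMap.mulRight K (X (inr i)) =
      LinearMap.mulRight K (gen K (inr i)) ∘ₗ normalOrder K from congr($h f)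
  refine (basisMonomials _ K).ext fun μ ↦ ?_
  have hμ : monomial μ (1 : K) * X (inr i) = monomial (μ + Finsupp.single (inr i) 1) 1 := by
    rw [X, monomial_mul, one_mul]
  simp only [coe_basisMonomials, LinearMap.comp_apply, LinearMap.mulRight_apply]
  rw [hμ, normalOrder_monomial, normalOrder_monomial, ← hμ, map_mul, map_mul]
  simp [xPart, dPart, mul_assoc]

lemma gen_inr_mul_normalOrder (i : Fin n) (f : MvPolynomial (Fin n ⊕ Fin n) K) :
    gen K (inr i) * normalOrder K f = normalOrder K (X (inr i) * f + pderiv (inl i) f) := by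
  induction f using MvPolynomial.induction_on with
  | C c =>
    rw [pderiv_C, add_zero, mul_comm, normalOrder_mul_X_inr, normalOrder_C, Algebra.commutes]
  | add p q hp hq =>
    rw [(normalOrder K).map_add, mul_add, hp, hq, ← (normalOrder K).map_add,
      (pderiv (inl i)).map_add]
    congr 1
    ring
  | mul_X p s hp =>
    rcases s with j | j
    · rw [mul_comm p, normalOrder_X_inl_mul, ← mul_assoc, gen_inr_mul_gen_inl, add_mul,
        mul_assoc, hp, ← normalOrder_X_inl_mul]
      split_ifs with h
      · subst h
        rw [one_mul, ← map_add]
        simp only [pderiv_mul, pderiv_X_self]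
        ring_nf
      · rw [zero_mul, add_zero]
        simp only [pderiv_mul, pderiv_X_of_ne (show inl j ≠ inl i by simpa [eq_comm] using h)]
        ring_nf
    · rw [normalOrder_mul_X_inr, ← mul_assoc, hp, ← normalOrder_mul_X_inr]
      simp only [pderiv_mul, pderiv_X_of_ne (show inr j ≠ inl i by simp)]
      ring_nf

lemma normalOrder_surjective : Function.Surjective (normalOrder K (n := n)) := by
  have key : ∀ b : WeylN K n, ∀ f, b * normalOrder K f ∈ LinearMap.range (normalOrder K) := by
    intro b
    have hb : b ∈ Algebra.adjoin K (Set.range (gen K)) := adjoin_range_gen K ▸ trivial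
    induction hb using Algebra.adjoin_induction with
    | mem x hx =>
      obtain ⟨s | s, rfl⟩ := hx
      · exact fun f ↦ ⟨_, normalOrder_X_inl_mul s f⟩
      · exact fun f ↦ ⟨_, (gen_inr_mul_normalOrder s f).symm⟩
    | algebraMap r => exact fun f ↦ ⟨r • f, by rw [map_smul, Algebra.smul_def]⟩
    | add x y _ _ hx hy => exact fun f ↦ add_mul x y _ ▸ add_mem (hx f) (hy f)
    | mul x y _ _ hx hy =>
      intro f
      obtain ⟨g, hg⟩ := hy f
      rw [mul_assoc, ← hg]
      exact hx g
  intro a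
  simpa [normalOrder_one] using key a 1

lemma rep_algebraMap (c : K) :
    rep K (algebraMap K (WeylN K n) c) = LinearMap.mulLeft K (C c) := by
  refine LinearMap.ext fun f ↦ ?_
  simp [smul_eq_C_mul]

lemma rep_normalOrder_apply (f : MvPolynomial (Fin n ⊕ Fin n) K)
    {g : MvPolynomial (Fin n ⊕ Fin n) K} (hg : g ∈ supported K (Set.range inr)) :
    rep K (normalOrder K f) g = f * g := by
  induction f using MvPolynomial.induction_on generalizing g with
  | C c => simp [normalOrder_C, smul_eq_C_mul]
  | add p q hp hq => simp [hp hg, hq hg, add_mul]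
  | mul_X p s hp =>
    rcases s with j | j
    · rw [mul_comm p, normalOrder_X_inl_mul, map_mul, Module.End.mul_apply, hp hg]
      simp [repGen, mul_assoc]
    · have hpd : pderiv (inl j) g = 0 := pderiv_eq_zero_of_notMem_vars fun h ↦ by
        simpa using mem_supported.mp hg h
      have hX : X (inr j) ∈ supported K (Set.range (inr : Fin n → Fin n ⊕ Fin n)) := by
        rw [supported_eq_adjoin_X]
        exact Algebra.subset_adjoin ⟨inr j, ⟨j, rfl⟩, rfl⟩
      rw [normalOrder_mul_X_inr, map_mul, Module.End.mul_apply]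
      simp [repGen, hpd, hp (mul_mem hX hg)]
      ring

lemma rep_normalOrder_apply_one (f : MvPolynomial (Fin n ⊕ Fin n) K) :
    rep K (normalOrder K f) 1 = f := by
  simpa using rep_normalOrder_apply f (one_mem _)

lemma normalOrder_rep_apply_one (a : WeylN K n) : normalOrder K (rep K a 1) = a := by
  obtain ⟨f, rfl⟩ := normalOrder_surjective a
  rw [rep_normalOrder_apply_one]

lemma rep_apply_one_injective : Function.Injective fun a : WeylN K n ↦ rep K a 1 :=
  Function.LeftInverse.injective normalOrder_rep_apply_one

lemma rep_gen_apply_one (s : Fin n ⊕ Fin n) : rep K (gen K s) 1 = X s := by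
  rcases s with i | i <;> simp [repGen]

lemma isSymbol_rep_gen [Nontrivial K] (s : Fin n ⊕ Fin n) :
    IsSymbol 1 (rep K (gen K s)) (X s) := by
  have hX : (X s : MvPolynomial (Fin n ⊕ Fin n) K) ∈ restrictTotalDegree _ K 1 := by
    rw [mem_restrictTotalDegree, totalDegree_X]
  rcases s with i | i
  · simpa [repGen] using isSymbol_mulLeft hX
  · simpa [repGen] using (isSymbol_pderiv (inl i)).add (isSymbol_mulLeft hX)

lemma isSymbol_rep_normalOrder [Nontrivial K] (f : MvPolynomial (Fin n ⊕ Fin n) K) :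
    IsSymbol f.totalDegree (rep K (normalOrder K f)) f := by
  have hmonomial : ∀ (μ : Fin n ⊕ Fin n →₀ ℕ) (c : K),
      IsSymbol (monomial μ c).totalDegree (rep K (normalOrder K (monomial μ c)))
        (monomial μ c) := by
    refine induction_on_monomial (fun c ↦ ?_) (fun p s hp ↦ ?_)
    · rw [normalOrder_C, rep_algebraMap]
      exact isSymbol_mulLeft (by simp [mem_restrictTotalDegree])
    rcases eq_or_ne p 0 with rfl | hp0
    · simpa using isSymbol_mulLeft (zero_mem (restrictTotalDegree _ K 0))
    rw [totalDegree_mul_X hp0]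
    rcases s with i | i
    · rw [mul_comm, normalOrder_X_inl_mul, map_mul, add_comm]
      exact (isSymbol_rep_gen (inl i)).mul hp
    · rw [normalOrder_mul_X_inr, map_mul]
      exact hp.mul (isSymbol_rep_gen (inr i))
  have hsum := Finset.sum_induction (fun μ ↦ monomial μ (coeff μ f))
    (fun q ↦ IsSymbol f.totalDegree (rep K (normalOrder K q)) q)
    (fun p q hp hq ↦ by simpa using hp.add hq)
    (by simpa using isSymbol_mulLeft (zero_mem (restrictTotalDegree _ K _)))
    (fun μ hμ ↦ (hmonomial μ _).mono ((totalDegree_monomial_le _ _).trans (le_totalDegree hμ)))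
  rwa [← as_sum] at hsum

lemma isSymbol_rep [Nontrivial K] (a : WeylN K n) :
    IsSymbol (rep K a 1).totalDegree (rep K a) (rep K a 1) := by
  simpa only [normalOrder_rep_apply_one] using isSymbol_rep_normalOrder (K := K) (rep K a 1)

lemma exists_gen_mul_sub_mul_gen_eq_algebraMap (s t : Fin n ⊕ Fin n) :
    ∃ c : K, gen K s * gen K t - gen K t * gen K s = algebraMap K (WeylN K n) c := by
  rcases s with i | i <;> rcases t with j | j
  · exact ⟨0, by rw [(gen_inl_commute K i j).eq, sub_self, map_zero]⟩
  · refine ⟨-if j = i then 1 else 0, ?_⟩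
    rw [gen_inr_mul_gen_inl]
    split_ifs <;> simp
  · refine ⟨if i = j then 1 else 0, ?_⟩
    rw [gen_inr_mul_gen_inl]
    split_ifs <;> simp
  · exact ⟨0, by rw [(gen_inr_commute K i j).eq, sub_self, map_zero]⟩

lemma gen_pow_mem_center (p : ℕ) [CharP K p] (s : Fin n ⊕ Fin n) :
    gen K s ^ p ∈ Subalgebra.center K (WeylN K n) := by
  rw [Subalgebra.mem_center_iff]
  intro b
  have hb : b ∈ Algebra.adjoin K (Set.range (gen K (n := n))) := by
    rw [adjoin_range_gen]; trivial
  refine (Algebra.commute_of_mem_adjoin_of_forall_mem_commute hb ?_).eq.symm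
  rintro _ ⟨t, rfl⟩
  obtain ⟨c, hc⟩ := exists_gen_mul_sub_mul_gen_eq_algebraMap (K := K) s t
  exact commute_pow_of_mul_sub_mul_eq_algebraMap p hc

lemma algebraMap_injective : Function.Injective (algebraMap K (WeylN K n)) := fun c d h ↦ by
  have := congr(rep K $h 1)
  rw [rep_algebraMap, rep_algebraMap] at this
  exact C_injective (Fin n ⊕ Fin n) K (by simpa using this)

lemma eq_gen_of_pow_eq_gen_pow [IsDomain K] (p : ℕ) [Fact p.Prime] [CharP K p] {a : WeylN K n}
    {s : Fin n ⊕ Fin n} (h : a ^ p = gen K s ^ p) : a = gen K s := by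
  have := charP_of_injective_algebraMap (algebraMap_injective (K := K) (n := n)) p
  set f := rep K a 1
  set r := f - X s
  set d := max 1 r.totalDegree
  have hfd : f.totalDegree ≤ d := by
    rw [show f = r + X s by ring]
    exact (totalDegree_add _ _).trans (by rw [totalDegree_X]; omega)
  have hsa : IsSymbol d (rep K a) f := (isSymbol_rep a).mono hfd
  have hsg : IsSymbol (p * d) (rep K a ^ p) (X s ^ p) := by
    rw [← map_pow, h, map_pow]
    exact ((isSymbol_rep_gen s).mono (le_max_left _ _)).pow p
  have hr : r ^ p ∈ restrictTotalDegreeLT _ K (p * d) := by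
    rw [sub_pow_char]
    exact (hsa.pow p).sub_mem_restrictTotalDegreeLT hsg
  have hr0 : r.totalDegree = 0 := by
    by_contra hne
    have hr0 : r ≠ 0 := by rintro hr; simp [hr] at hne
    have hlt := totalDegree_lt_of_mem_restrictTotalDegreeLT (pow_ne_zero p hr0) hr
    rw [totalDegree_pow_of_isDomain] at hlt
    have := Nat.lt_of_mul_lt_mul_left hlt
    omega
  rw [totalDegree_eq_zero_iff_eq_C] at hr0
  set c := coeff 0 r
  have ha : a = gen K s + algebraMap K _ c := rep_apply_one_injective <| by
    simp only [map_add, LinearMap.add_apply, rep_gen_apply_one, rep_algebraMap,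
      LinearMap.mulLeft_apply, mul_one, ← hr0, r]
    ring
  rw [ha, add_pow_char_of_commute _ (Algebra.commutes c _).symm, ← map_pow,
    add_eq_left, map_eq_zero_iff _ algebraMap_injective,
    pow_eq_zero_iff (Fact.out : p.Prime).ne_zero] at h
  rw [ha, h, map_zero, add_zero]

lemma algEquiv_ext_of_eqOn_center [IsDomain K] (p : ℕ) [Fact p.Prime] [CharP K p]
    {σ τ : WeylN K n ≃ₐ[K] WeylN K n}
    (h : ∀ z ∈ Subalgebra.center K (WeylN K n), σ z = τ z) : σ = τ := by
  have hgen : ∀ s, σ (gen K s) = τ (gen K s) := fun s ↦ by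
    have : τ.symm (σ (gen K s)) ^ p = gen K s ^ p := by
      rw [← map_pow, ← map_pow, h _ (gen_pow_mem_center p s), AlgEquiv.symm_apply_apply]
    exact (AlgEquiv.symm_apply_eq τ).mp (eq_gen_of_pow_eq_gen_pow p this)
  exact AlgEquiv.coe_toAlgHom_injective (algHom_ext hgen)

end WeylN

theorem statement17 (p n : ℕ) (hp : p.Prime) (K : Type*) [Field K] [CharP K p]
    (res : (WeylN K n ≃ₐ[K] WeylN K n) →
      (Subalgebra.center K (WeylN K n) ≃ₐ[K] Subalgebra.center K (WeylN K n)))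
    (hres : ∀ (σ : WeylN K n ≃ₐ[K] WeylN K n) (z : Subalgebra.center K (WeylN K n)),
      (↑(res σ z) : WeylN K n) = σ (↑z : WeylN K n)) :
    (∀ σ τ, res (σ * τ) = res σ * res τ) ∧ Function.Injective res := by
  have := Fact.mk hp
  refine ⟨fun σ τ ↦ ?_, fun σ τ hστ ↦ ?_⟩
  · ext z
    simp [hres]
  · refine WeylN.algEquiv_ext_of_eqOn_center p fun z hz ↦ ?_
    rw [← hres σ ⟨z, hz⟩, ← hres τ ⟨z, hz⟩, hστ]
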